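/- arXiv:2508.21709 — 4 statements merged into one kernel-verified Lean document; each statement's English description precedes it below -/
import Mathlib

section
/- Let A be a unital C*-algebra, let m ≥ 1 be an integer, and let ε be a real number with 0 ≤ ε < 2^(−m). Suppose v ∈ A satisfies ‖v*v − 1‖ ≤ ε, ‖vv* − 1‖ ≤ ε, and ‖v^m − 1‖ ≤ ε. Then there exists a unitary u ∈ A such that u^m = 1 and ‖u − v‖ ≤ 2^(m+2)·ε. -/
/-!
The polar part `w = v (v⋆v)^(-1/2)` of `v` is a unitary with `‖w - v‖ ≤ ‖v⋆v - 1‖ ≤ ε`,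
hence `‖w ^ m - 1‖ ≤ 4mε < 2`. So `-1 ∉ σ(w ^ m)`, and `w ^ m = exp (i x)` for the
self-adjoint `x = arg (w ^ m)` (principal branch), where `‖x‖ ≤ π/2 ‖w ^ m - 1‖`.
The unitary `c = exp (-i x / m)` is a function of `w ^ m`, so it commutes with `w`, and
`u = w c` satisfies `u ^ m = w ^ m exp (-i x) = 1` and `‖u - w‖ = ‖c - 1‖ ≤ ‖x‖ / m ≤ 2πε`.
Altogether `‖u - v‖ ≤ (2π + 1)ε ≤ 2 ^ (m + 2) ε`.
-/

open scoped Real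

theorem isUnit_of_isUnit_mul_of_isUnit_mul {M : Type*} [Monoid M] {a b : M}
    (hba : IsUnit (b * a)) (hab : IsUnit (a * b)) : IsUnit a := by
  obtain ⟨c, hc⟩ := hba.exists_left_inv
  obtain ⟨d, hd⟩ := hab.exists_right_inv
  exact isUnit_iff_exists_and_exists.mpr
    ⟨⟨b * d, by rw [← mul_assoc, hd]⟩, ⟨c * b, by rw [mul_assoc, hc]⟩⟩

theorem isUnit_of_norm_sub_one_lt_one {R : Type*} [NormedRing R] [HasSummableGeomSeries R]
    {x : R} (h : ‖x - 1‖ < 1) : IsUnit x := by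
  by_contra hx
  exact nonunits.subset_compl_ball hx (mem_ball_iff_norm.mpr h)

theorem norm_pow_sub_pow_le {R : Type*} [NormedRing R] [NormOneClass R] {x y : R} {C : ℝ}
    (hx : ‖x‖ ≤ C) (hy : ‖y‖ ≤ C) (n : ℕ) :
    ‖x ^ n - y ^ n‖ ≤ n * C ^ (n - 1) * ‖x - y‖ := by
  induction n with
  | zero => simp
  | succ n ih =>
    have hC : 0 ≤ C := (norm_nonneg x).trans hx
    have hxn : ‖x ^ n‖ ≤ C ^ n := (norm_pow_le x n).trans (pow_le_pow_left₀ (norm_nonneg x) hx n)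
    have key : x ^ (n + 1) - y ^ (n + 1) = x ^ n * (x - y) + (x ^ n - y ^ n) * y := by
      rw [pow_succ, pow_succ]; noncomm_ring
    have hpow : (n : ℝ) * C ^ (n - 1) * C = n * C ^ n := by
      rcases n with _ | n
      · simp
      · simp only [Nat.add_sub_cancel, pow_succ]; ring
    calc ‖x ^ (n + 1) - y ^ (n + 1)‖
        ≤ ‖x ^ n‖ * ‖x - y‖ + ‖x ^ n - y ^ n‖ * ‖y‖ := by
          rw [key]; exact (norm_add_le _ _).trans (add_le_add (norm_mul_le _ _) (norm_mul_le _ _))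
      _ ≤ C ^ n * ‖x - y‖ + n * C ^ (n - 1) * ‖x - y‖ * C := by gcongr
      _ = (n + 1 : ℕ) * C ^ (n + 1 - 1) * ‖x - y‖ := by
          push_cast; linear_combination ‖x - y‖ * hpow

theorem norm_pow_sub_pow_le_three_mul {R : Type*} [NormedRing R] [NormOneClass R] {x y : R}
    {n : ℕ} {ε : ℝ} (hx : ‖x‖ ≤ 1) (hxy : ‖x - y‖ ≤ ε) (hnε : n * ε ≤ 1) :
    ‖x ^ n - y ^ n‖ ≤ 3 * n * ε := by
  have hε : 0 ≤ ε := (norm_nonneg _).trans hxy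
  have hy : ‖y‖ ≤ 1 + ε := by
    calc ‖y‖ ≤ ‖x‖ + ‖y - x‖ := norm_le_norm_add_norm_sub' y x
      _ ≤ 1 + ε := by rw [norm_sub_rev]; linarith
  have hgrowth : (1 + ε) ^ (n - 1) ≤ 3 := by
    calc (1 + ε) ^ (n - 1) ≤ Real.exp ε ^ (n - 1) := by gcongr; linarith [Real.add_one_le_exp ε]
      _ ≤ Real.exp ε ^ n := pow_le_pow_right₀ (Real.one_le_exp hε) (Nat.sub_le n 1)
      _ = Real.exp (n * ε) := (Real.exp_nat_mul ε n).symm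
      _ ≤ Real.exp 1 := Real.exp_le_exp.mpr hnε
      _ ≤ 3 := by linarith [Real.exp_one_lt_d9]
  calc ‖x ^ n - y ^ n‖ ≤ n * (1 + ε) ^ (n - 1) * ‖x - y‖ :=
        norm_pow_sub_pow_le (by linarith) hy n
    _ ≤ n * 3 * ε := by gcongr
    _ = 3 * n * ε := by ring

theorem Nat.two_mul_le_two_pow {m : ℕ} (hm : 1 ≤ m) : 2 * m ≤ 2 ^ m := by
  induction m, hm using Nat.le_induction with
  | base => norm_num
  | succ n hn ih => rw [pow_succ]; omega

theorem natCast_mul_lt_half_of_lt_two_zpow_neg {m : ℕ} (hm : 1 ≤ m) {ε : ℝ}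
    (hε : ε < (2 : ℝ) ^ (-(m : ℤ))) : m * ε < 1 / 2 := by
  have h2m : (2 * m : ℝ) ≤ 2 ^ m := by exact_mod_cast Nat.two_mul_le_two_pow hm
  rw [zpow_neg, zpow_natCast] at hε
  calc m * ε < m * (2 ^ m)⁻¹ := by gcongr
    _ ≤ 1 / 2 := by rw [← div_eq_mul_inv, div_le_iff₀ (by positivity)]; linarith

section CStarAlgebra

open Complex selfAdjoint Unitary

variable {A : Type*} [CStarAlgebra A]

theorem Real.abs_sqrt_sub_one_le {t : ℝ} (ht : 0 ≤ t) : |√t - 1| ≤ |t - 1| := by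
  have h : t - 1 = (√t - 1) * (√t + 1) := by linear_combination -Real.sq_sqrt ht
  rw [h, abs_mul, abs_of_pos (by positivity : 0 < √t + 1)]
  nlinarith [abs_nonneg (√t - 1), Real.sqrt_nonneg t]

theorem CFC.norm_sqrt_sub_one_le [PartialOrder A] [StarOrderedRing A] {a : A} (ha : 0 ≤ a) :
    ‖CFC.sqrt a - 1‖ ≤ ‖a - 1‖ := by
  have hsqrt : CFC.sqrt a - 1 = cfc (fun t : ℝ => √t - 1) a := by
    rw [CFC.sqrt_eq_real_sqrt a, cfcₙ_eq_cfc, cfc_sub .., cfc_const_one ℝ a]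
  have hid : a - 1 = cfc (fun t : ℝ => t - 1) a := by
    rw [cfc_sub .., cfc_id' ℝ a, cfc_const_one ℝ a]
  rw [hsqrt, hid]
  refine norm_cfc_le (norm_nonneg _) fun t ht => ?_
  exact (Real.abs_sqrt_sub_one_le (spectrum_nonneg_of_nonneg ha ht)).trans
    (norm_apply_le_norm_cfc (fun t : ℝ => t - 1) a ht)

theorem selfAdjoint.expUnitary_nsmul (x : selfAdjoint A) (n : ℕ) :
    expUnitary (n • x) = expUnitary x ^ n := by
  induction n with
  | zero => simp
  | succ n ih =>
    rw [succ_nsmul, ((Commute.refl (x : A)).smul_left n).expUnitary_add, ih, pow_succ]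

theorem selfAdjoint.norm_expUnitary_sub_one_le {x : selfAdjoint A} (hx : ‖x‖ ≤ π) :
    ‖(expUnitary x - 1 : A)‖ ≤ ‖x‖ := by
  rw [← sq_le_sq₀ (norm_nonneg _) (norm_nonneg _), norm_sq_expUnitary_sub_one hx]
  linarith [Real.one_sub_sq_div_two_le_cos (x := ‖x‖)]

theorem Unitary.norm_argSelfAdjoint_le {u : unitary A} (hu : ‖(u - 1 : A)‖ < 2) :
    ‖argSelfAdjoint u‖ ≤ π / 2 * ‖(u - 1 : A)‖ := by
  have hθ := norm_argSelfAdjoint_le_pi u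
  have hcos := Real.cos_le_one_sub_mul_cos_sq (x := ‖argSelfAdjoint u‖)
    (by rwa [abs_of_nonneg (norm_nonneg _)])
  have hπ := Real.pi_pos
  have h : 2 * ‖argSelfAdjoint u‖ ^ 2 ≤ π ^ 2 * (1 - Real.cos ‖argSelfAdjoint u‖) := by
    have := mul_le_mul_of_nonneg_left hcos (sq_nonneg π)
    field_simp at this
    linarith
  rw [← sq_le_sq₀ (norm_nonneg _) (by positivity), mul_pow,
    ← two_mul_one_sub_cos_norm_argSelfAdjoint hu]
  linear_combination h / 2

theorem exists_mem_unitary_norm_sub_le_of_isUnit {v : A} (hv : IsUnit v) :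
    ∃ w ∈ unitary A, ‖w - v‖ ≤ ‖star v * v - 1‖ := by
  let _ := CStarAlgebra.spectralOrder A
  let _ := CStarAlgebra.spectralOrderedRing A
  set a := star v * v
  have ha : 0 ≤ a := star_mul_self_nonneg v
  have ha_unit : IsUnit a := hv.star.mul hv
  set b : A := a ^ (-(1 / 2) : ℝ)
  have hb_sqrt : b * CFC.sqrt a = 1 := by
    rw [CFC.sqrt_eq_rpow, ← CFC.rpow_add ha_unit, neg_add_cancel, CFC.rpow_zero a]
  have hbab : b * a * b = 1 := by
    conv_lhs => rw [← CFC.rpow_one a]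
    rw [← CFC.rpow_add ha_unit, ← CFC.rpow_add ha_unit]
    norm_num
    exact CFC.rpow_zero a
  have hw_unitary : v * b ∈ unitary A := by
    refine (hv.mul (ha_unit.cfcRpow _)).mem_unitary_of_star_mul_self ?_
    rw [star_mul, (CFC.rpow_nonneg : 0 ≤ b).isSelfAdjoint.star_eq, ← hbab]
    change b * star v * (v * b) = b * (star v * v) * b
    simp only [mul_assoc]
  refine ⟨v * b, hw_unitary, ?_⟩
  have hsplit : v * b - v = v * b * (1 - CFC.sqrt a) := by
    rw [mul_sub, mul_one, mul_assoc, hb_sqrt, mul_one]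
  rw [hsplit, CStarRing.norm_mem_unitary_mul _ hw_unitary, norm_sub_rev]
  exact CFC.norm_sqrt_sub_one_le ha

theorem exists_mem_unitary_norm_sub_le {v : A} {ε : ℝ} (hε : ε < 1)
    (h₁ : ‖star v * v - 1‖ ≤ ε) (h₂ : ‖v * star v - 1‖ ≤ ε) :
    ∃ w ∈ unitary A, ‖w - v‖ ≤ ε := by
  have hv : IsUnit v := isUnit_of_isUnit_mul_of_isUnit_mul
    (isUnit_of_norm_sub_one_lt_one (h₁.trans_lt hε))
    (isUnit_of_norm_sub_one_lt_one (h₂.trans_lt hε))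
  obtain ⟨w, hw, hwv⟩ := exists_mem_unitary_norm_sub_le_of_isUnit hv
  exact ⟨w, hw, hwv.trans h₁⟩

theorem Unitary.exists_pow_eq_one_norm_sub_le {w : A} (hw : w ∈ unitary A) {m : ℕ} (hm : m ≠ 0)
    (h : ‖w ^ m - 1‖ < 2) :
    ∃ u ∈ unitary A, u ^ m = 1 ∧ ‖u - w‖ ≤ π / 2 * ‖w ^ m - 1‖ / m := by
  set W : unitary A := ⟨w, hw⟩
  set Z := W ^ m
  have hZ : ‖(Z : A) - 1‖ < 2 := by simpa [Z, W] using h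
  set x := argSelfAdjoint Z
  set C := expUnitary (-(m : ℝ)⁻¹ • x)
  have hCZ : C ^ m * Z = 1 := by
    have hmx : m • (-(m : ℝ)⁻¹ • x) = -x := by
      rw [← Nat.cast_smul_eq_nsmul ℝ, smul_smul, mul_neg, mul_inv_cancel₀ (by exact_mod_cast hm),
        neg_one_smul]
    conv_lhs => rw [← expUnitary_argSelfAdjoint hZ]
    rw [← expUnitary_nsmul, hmx, ← ((Commute.refl (x : A)).neg_left).expUnitary_add,
      neg_add_cancel, expUnitary_zero]
  have hxw : Commute (x : A) w := by
    have hww : Commute (star w) w := by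
      rw [commute_iff_eq, Unitary.star_mul_self_of_mem hw, Unitary.mul_star_self_of_mem hw]
    refine Commute.cfc ?_ ?_ _
    · exact (Commute.refl w).pow_left m
    · simpa [Z, W, star_pow] using hww.pow_left m
  have hWC : Commute W C := by
    refine Subtype.ext (?_ : w * (C : A) = C * w)
    simp only [C, expUnitary_coe, selfAdjoint.val_smul]
    exact (((hxw.symm.smul_right _).smul_right I).exp_right).eq
  have hpow : (W * C) ^ m = 1 := by
    rw [hWC.mul_pow, eq_inv_of_mul_eq_one_left hCZ, mul_inv_cancel]
  have hm1 : (1 : ℝ) ≤ m := by exact_mod_cast Nat.one_le_iff_ne_zero.mpr hm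
  have hnorm : ‖-(m : ℝ)⁻¹ • x‖ = ‖x‖ / m := by
    rw [norm_smul, norm_neg, norm_inv, Real.norm_natCast, inv_mul_eq_div]
  have hsmall : ‖-(m : ℝ)⁻¹ • x‖ ≤ π :=
    hnorm ▸ (div_le_self (norm_nonneg _) hm1).trans (norm_argSelfAdjoint_le_pi Z)
  refine ⟨W * C, (W * C).2, by simpa using congrArg Subtype.val hpow, ?_⟩
  calc ‖((W * C : unitary A) : A) - w‖ = ‖(C : A) - 1‖ := by
        show ‖w * (C : A) - w‖ = _
        rw [← CStarRing.norm_mem_unitary_mul ((C : A) - 1) hw, mul_sub, mul_one]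
    _ ≤ ‖x‖ / m := hnorm ▸ norm_expUnitary_sub_one_le hsmall
    _ ≤ π / 2 * ‖(Z : A) - 1‖ / m := by gcongr; exact norm_argSelfAdjoint_le hZ
    _ = π / 2 * ‖w ^ m - 1‖ / m := by simp [Z, W]

end CStarAlgebra

/-- **Stability of approximate order-`m` unitaries** (the paper's Lemma `U-Stab`).
If `v` in a unital C*-algebra `A` is an `ε`-approximate unitary of approximate order `m`
(with `0 ≤ ε < 2^(-m)`), then there is a genuine unitary `u` with `u ^ m = 1`
and `‖u - v‖ ≤ 2^(m+2) * ε`. -/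
theorem stmt_0 {A : Type*} [CStarAlgebra A]
    (m : ℕ) (hm : 1 ≤ m) (ε : ℝ) (hε0 : 0 ≤ ε) (hε : ε < (2 : ℝ) ^ (-(m : ℤ)))
    (v : A)
    (h1 : ‖star v * v - 1‖ ≤ ε) (h2 : ‖v * star v - 1‖ ≤ ε)
    (h3 : ‖v ^ m - 1‖ ≤ ε) :
    ∃ u : A, u ∈ unitary A ∧ u ^ m = 1 ∧ ‖u - v‖ ≤ 2 ^ (m + 2) * ε := by
  rcases subsingleton_or_nontrivial A with hA | hA
  · exact ⟨1, one_mem _, one_pow m, by simp [Subsingleton.elim (1 - v) 0]; positivity⟩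
  have hmε : m * ε < 1 / 2 := natCast_mul_lt_half_of_lt_two_zpow_neg hm hε
  have hεmε : ε ≤ m * ε := le_mul_of_one_le_left hε0 (by exact_mod_cast hm)
  obtain ⟨w, hw, hwv⟩ := exists_mem_unitary_norm_sub_le (by linarith) h1 h2
  have hwm : ‖w ^ m - 1‖ ≤ 4 * m * ε := by
    have hpow := norm_pow_sub_pow_le_three_mul (CStarRing.norm_of_mem_unitary hw).le hwv
      (by linarith : m * ε ≤ 1)
    calc ‖w ^ m - 1‖ ≤ ‖w ^ m - v ^ m‖ + ‖v ^ m - 1‖ := norm_sub_le_norm_sub_add_norm_sub _ _ _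
      _ ≤ 4 * m * ε := by linarith
  obtain ⟨u, hu, hum, huw⟩ :=
    Unitary.exists_pow_eq_one_norm_sub_le hw (by omega : m ≠ 0) (by linarith)
  have h8 : (8 : ℝ) ≤ 2 ^ (m + 2) := by
    calc (8 : ℝ) = 2 ^ 3 := by norm_num
      _ ≤ 2 ^ (m + 2) := pow_le_pow_right₀ one_le_two (by omega)
  refine ⟨u, hu, hum, ?_⟩
  calc ‖u - v‖ ≤ ‖u - w‖ + ‖w - v‖ := norm_sub_le_norm_sub_add_norm_sub _ _ _
    _ ≤ π / 2 * (4 * m * ε) / m + ε := by gcongr; exact huw.trans (by gcongr)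
    _ = (2 * π + 1) * ε := by field_simp; ring
    _ ≤ 2 ^ (m + 2) * ε := by gcongr; linarith [Real.pi_lt_d2]
end

section
/- Let A be a unital C*-algebra, let m ≥ 1 be an integer, and let ε be a real number with 0 ≤ ε < 2^(−m). Suppose v ∈ A satisfies ‖v*v − 1‖ ≤ ε, ‖vv* − 1‖ ≤ ε, and ‖v^m − 1‖ ≤ ε. Then the unitary u₀ := v·(vv*)^(−1/2) satisfies ‖u₀^m − 1‖ ≤ 2^(m+1)·ε. -/
/-! With `b = v v⋆` we have `‖b - 1‖ ≤ ε ≤ 1/2`, so the spectrum of `b` lies in `[1 - ε, 1 + ε]`,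
where `|t^(-1/2) - 1| ≤ ε`; hence `‖b^(-1/2) - 1‖ ≤ ε` and `u₀ = v b^(-1/2)` is within `(1 + ε)²ε`
of `v`. Telescoping `u₀^m - v^m` with `‖u₀‖, ‖v‖ ≤ (1 + ε)²` gives
`‖u₀^m - 1‖ ≤ m (1 + ε)^(2m) ε + ε`, and `(1 + ε)^(2m) ≤ e^(2mε) ≤ e < 3` because `2m ≤ 2^m`. -/

theorem norm_pow_succ_sub_pow_succ_le {R : Type*} [NormedRing R] {x y : R} {C : ℝ}
    (hx : ‖x‖ ≤ C) (hy : ‖y‖ ≤ C) (n : ℕ) :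
    ‖x ^ (n + 1) - y ^ (n + 1)‖ ≤ (n + 1) * C ^ n * ‖x - y‖ := by
  have hC : 0 ≤ C := (norm_nonneg x).trans hx
  induction n with
  | zero => simp
  | succ n ih =>
    have hxn : ‖x ^ (n + 1)‖ ≤ C ^ (n + 1) :=
      (norm_pow_le' x n.succ_pos).trans (pow_le_pow_left₀ (norm_nonneg x) hx _)
    calc ‖x ^ (n + 2) - y ^ (n + 2)‖
        = ‖x ^ (n + 1) * (x - y) + (x ^ (n + 1) - y ^ (n + 1)) * y‖ := by
          congr 1; simp only [mul_sub, sub_mul, ← pow_succ]; abel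
      _ ≤ ‖x ^ (n + 1)‖ * ‖x - y‖ + ‖x ^ (n + 1) - y ^ (n + 1)‖ * ‖y‖ :=
          (norm_add_le _ _).trans (add_le_add (norm_mul_le _ _) (norm_mul_le _ _))
      _ ≤ C ^ (n + 1) * ‖x - y‖ + (n + 1) * C ^ n * ‖x - y‖ * C := by gcongr
      _ = (↑(n + 1) + 1) * C ^ (n + 1) * ‖x - y‖ := by push_cast; ring

theorem abs_rpow_neg_half_sub_one_le {t ε : ℝ} (hε : ε ≤ 1 / 2) (ht : |t - 1| ≤ ε) :
    |t ^ (-(1 / 2 : ℝ)) - 1| ≤ ε := by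
  have ht_half : 1 / 2 ≤ t := by linarith [neg_abs_le (t - 1)]
  have hs_sq : √t ^ 2 = t := Real.sq_sqrt (by linarith)
  have hs_pos : 0 < √t := Real.sqrt_pos.mpr (by linarith)
  -- `√t (1 + √t) = √t + t ≥ 1` because both summands are at least `1/2`
  have hs_one : 1 ≤ √t * (1 + √t) := by nlinarith
  have key : t ^ (-(1 / 2 : ℝ)) - 1 = (1 - t) / (√t * (1 + √t)) := by
    rw [Real.rpow_neg (by linarith), ← Real.sqrt_eq_rpow]
    field_simp
    linear_combination -hs_sq
  rw [key, abs_div, abs_of_pos (by positivity : 0 < √t * (1 + √t)), div_le_iff₀ (by positivity),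
    abs_sub_comm]
  nlinarith [abs_nonneg (t - 1)]

theorem abs_sub_one_le_of_mem_spectrum {A : Type*} [NormedRing A] [NormedAlgebra ℝ A]
    [NormOneClass A] [CompleteSpace A] {a : A} {t : ℝ} (ht : t ∈ spectrum ℝ a) :
    |t - 1| ≤ ‖a - 1‖ := by
  have : t - 1 ∈ spectrum ℝ (a - algebraMap ℝ A 1) := by
    rw [← spectrum.sub_singleton_eq]
    exact Set.sub_mem_sub ht rfl
  simpa using spectrum.norm_le_norm_of_mem this

theorem norm_cfc_rpow_neg_half_sub_one_le {A : Type*} [CStarAlgebra A] [Nontrivial A]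
    {a : A} (ha : IsSelfAdjoint a) {ε : ℝ} (hε : ε ≤ 1 / 2) (h : ‖a - 1‖ ≤ ε) :
    ‖cfc (fun t : ℝ => t ^ (-(1 / 2 : ℝ))) a - 1‖ ≤ ε := by
  have hspec : ∀ t ∈ spectrum ℝ a, |t - 1| ≤ ε := fun t ht =>
    (abs_sub_one_le_of_mem_spectrum ht).trans h
  have hcont : ContinuousOn (fun t : ℝ => t ^ (-(1 / 2 : ℝ))) (spectrum ℝ a) :=
    continuousOn_id.rpow_const fun t ht => Or.inl <| ne_of_gt <| show 0 < t by
      linarith [neg_abs_le (t - 1), hspec t ht]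
  rw [← cfc_const_one ℝ a, ← cfc_sub _ _ a hcont continuousOn_const]
  exact norm_cfc_le ((norm_nonneg _).trans h) fun t ht =>
    abs_rpow_neg_half_sub_one_le hε (hspec t ht)

theorem norm_le_one_add_of_norm_sub_one_le {R : Type*} [NormedRing R] [NormOneClass R] {a : R}
    {ε : ℝ} (h : ‖a - 1‖ ≤ ε) : ‖a‖ ≤ 1 + ε :=
  (norm_le_norm_add_norm_sub' a 1).trans (by rw [norm_one]; linarith)

theorem norm_le_one_add_of_norm_mul_star_sub_one_le {A : Type*} [CStarAlgebra A] [Nontrivial A]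
    {v : A} {ε : ℝ} (h : ‖v * star v - 1‖ ≤ ε) : ‖v‖ ≤ 1 + ε := by
  have hε : 0 ≤ ε := (norm_nonneg _).trans h
  have hsq : ‖v‖ * ‖v‖ ≤ 1 + ε := by
    rw [← CStarRing.norm_self_mul_star]
    exact norm_le_one_add_of_norm_sub_one_le h
  nlinarith [norm_nonneg v]

theorem mul_one_add_pow_le_two_pow_succ_sub_one (m : ℕ) {ε : ℝ} (hε0 : 0 ≤ ε)
    (hε : ε ≤ ((2 : ℝ) ^ m)⁻¹) :
    (m : ℝ) * (1 + ε) ^ (2 * m) ≤ 2 ^ (m + 1) - 1 := by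
  have h2m : (2 * m : ℝ) ≤ 2 ^ m := by exact_mod_cast Nat.mul_le_pow (by norm_num) m
  have hm : (m + 1 : ℝ) ≤ 2 ^ m := by exact_mod_cast Nat.lt_two_pow_self
  have hmε : (2 * m : ℝ) * ε ≤ 1 := by
    calc (2 * m : ℝ) * ε ≤ 2 ^ m * ((2 : ℝ) ^ m)⁻¹ := by gcongr
      _ = 1 := mul_inv_cancel₀ (by positivity)
  have hpow : (1 + ε) ^ (2 * m) ≤ 3 :=
    calc (1 + ε) ^ (2 * m) ≤ Real.exp ε ^ (2 * m) := by
          gcongr; linarith [Real.add_one_le_exp ε]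
      _ = Real.exp ((2 * m : ℕ) * ε) := by rw [← Real.exp_nat_mul]
      _ ≤ Real.exp 1 := Real.exp_le_exp.mpr (by push_cast; exact hmε)
      _ ≤ 3 := (Real.exp_one_lt_d9.trans (by norm_num)).le
  rw [pow_succ]
  nlinarith [mul_le_mul_of_nonneg_left hpow m.cast_nonneg]

theorem stmt_3_general {A : Type*} [CStarAlgebra A]
    (m : ℕ) (ε : ℝ) (hε : ε < (2 : ℝ) ^ (-(m : ℤ)))
    (v : A)
    (h2 : ‖v * star v - 1‖ ≤ ε)
    (h3 : ‖v ^ m - 1‖ ≤ ε) :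
    ‖(v * cfc (fun t : ℝ => t ^ (-(1 / 2 : ℝ))) (v * star v)) ^ m - 1‖ ≤
      2 ^ (m + 1) * ε := by
  have hε0 : 0 ≤ ε := (norm_nonneg _).trans h3
  cases subsingleton_or_nontrivial A
  · rw [Subsingleton.elim (_ - 1 : A) 0, norm_zero]
    positivity
  set c := cfc (fun t : ℝ => t ^ (-(1 / 2 : ℝ))) (v * star v)
  have hεm : ε ≤ ((2 : ℝ) ^ m)⁻¹ := by simpa [zpow_neg] using hε.le
  rcases m with _ | n
  · simpa using hε0
  have hε_half : ε ≤ 1 / 2 :=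
    hεm.trans <| (one_div (2 : ℝ)).symm ▸ inv_anti₀ two_pos (le_self_pow₀ one_le_two n.succ_ne_zero)
  have hc : ‖c - 1‖ ≤ ε := norm_cfc_rpow_neg_half_sub_one_le (.mul_star_self v) hε_half h2
  have hc' : ‖c‖ ≤ 1 + ε := norm_le_one_add_of_norm_sub_one_le hc
  have hv : ‖v‖ ≤ 1 + ε := norm_le_one_add_of_norm_mul_star_sub_one_le h2
  have hvC : ‖v‖ ≤ (1 + ε) ^ 2 := hv.trans (by nlinarith)
  have hvc : ‖v * c‖ ≤ (1 + ε) ^ 2 := (norm_mul_le _ _).trans (sq (1 + ε) ▸ by gcongr)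
  have hvc_v : ‖v * c - v‖ ≤ (1 + ε) ^ 2 * ε := by
    rw [← mul_sub_one]
    exact (norm_mul_le _ _).trans (by gcongr)
  calc ‖(v * c) ^ (n + 1) - 1‖ ≤ ‖(v * c) ^ (n + 1) - v ^ (n + 1)‖ + ‖v ^ (n + 1) - 1‖ :=
        norm_sub_le_norm_sub_add_norm_sub _ _ _
    _ ≤ (n + 1) * ((1 + ε) ^ 2) ^ n * ((1 + ε) ^ 2 * ε) + ε :=
        add_le_add ((norm_pow_succ_sub_pow_succ_le hvc hvC n).trans (by gcongr)) h3
    _ = ((n + 1 : ℕ) : ℝ) * (1 + ε) ^ (2 * (n + 1)) * ε + ε := by push_cast; rw [pow_mul]; ring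
    _ ≤ (2 ^ (n + 1 + 1) - 1) * ε + ε := by
        gcongr; exact mul_one_add_pow_le_two_pow_succ_sub_one _ hε0 hεm
    _ = 2 ^ (n + 1 + 1) * ε := by ring

/-- **Intermediate norm estimate** in the proof of the paper's stability lemma for
approximate order-`m` unitaries: if `v` satisfies `‖v*v − 1‖ ≤ ε`, `‖vv* − 1‖ ≤ ε` and
`‖v^m − 1‖ ≤ ε` with `0 ≤ ε < 2^(-m)`, then the unitary `u₀ := v • (v v*)^(-1/2)`
(inverse square root via the continuous functional calculus) satisfies
`‖u₀^m − 1‖ ≤ 2^(m+1) * ε`. -/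
theorem stmt_3 {A : Type*} [CStarAlgebra A]
    (m : ℕ) (hm : 1 ≤ m) (ε : ℝ) (hε0 : 0 ≤ ε) (hε : ε < (2 : ℝ) ^ (-(m : ℤ)))
    (v : A)
    (h1 : ‖star v * v - 1‖ ≤ ε) (h2 : ‖v * star v - 1‖ ≤ ε)
    (h3 : ‖v ^ m - 1‖ ≤ ε) :
    ‖(v * cfc (fun t : ℝ => t ^ (-(1 / 2 : ℝ))) (v * star v)) ^ m - 1‖ ≤
      2 ^ (m + 1) * ε :=
  stmt_3_general m ε hε v h2 h3
end

section
/- Let A be a unital C*-algebra, let m ≥ 1 be an integer, and let u ∈ A be a unitary with ‖u^m − 1‖ < 2. Then there exists a unitary w ∈ A such that w^m = 1 and ‖u − w‖ ≤ (2/m)·‖u^m − 1‖. -/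
/-!
For `z` on the unit circle put `θ = arg (z ^ m) ∈ (-π, π]` and `f z = z * exp (-iθ/m)`. Then
`f z` is an `m`-th root of unity, `f` is continuous wherever `z ^ m ≠ -1`, and
`|z - f z| = |exp (-iθ/m) - 1| ≤ |θ|/m`, while Jordan's inequality gives
`|z ^ m - 1| = |exp (iθ) - 1| ≥ 2|θ|/π ≥ |θ|/2`. Since `‖u ^ m - 1‖ < 2`, the point `-1` is not in
`σ(u ^ m) = σ(u) ^ m`, so `w = f(u)` is defined by the continuous functional calculus, and the
scalar facts on `σ(u)` transfer to `w`.
-/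

open Complex

lemma Complex.two_div_pi_mul_abs_le_norm_exp_I_mul_ofReal_sub_one {x : ℝ} (hx : |x| ≤ Real.pi) :
    2 / Real.pi * |x| ≤ ‖exp (I * x) - 1‖ := by
  have hx2 : |x / 2| ≤ Real.pi / 2 := by rw [abs_div, abs_two]; linarith
  rw [norm_exp_I_mul_ofReal_sub_one, Real.norm_eq_abs, abs_mul, abs_two]
  calc 2 / Real.pi * |x| = 2 * (2 / Real.pi * |x / 2|) := by rw [abs_div, abs_two]; ring
    _ ≤ 2 * |Real.sin (x / 2)| := by gcongr; exact Real.mul_abs_le_abs_sin hx2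

lemma Complex.mem_slitPlane_of_norm_eq_one {w : ℂ} (hw : ‖w‖ = 1) (hne : w ≠ -1) :
    w ∈ slitPlane := by
  refine mem_slitPlane_iff_arg.mpr ⟨fun harg => hne ?_, norm_ne_zero_iff.mp (by simp [hw])⟩
  rw [← norm_mul_exp_arg_mul_I w, hw, harg]
  simp [exp_pi_mul_I]

lemma Complex.exp_I_mul_arg {w : ℂ} (hw : ‖w‖ = 1) : exp (I * arg w) = w := by
  simpa [hw, mul_comm] using norm_mul_exp_arg_mul_I w

noncomputable def rootCollapse (m : ℕ) (z : ℂ) : ℂ := z * exp (I * ((-arg (z ^ m) / m : ℝ) : ℂ))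

lemma norm_rootCollapse (m : ℕ) (z : ℂ) : ‖rootCollapse m z‖ = ‖z‖ := by
  rw [rootCollapse, norm_mul, norm_exp_I_mul_ofReal, mul_one]

lemma rootCollapse_pow (m : ℕ) (z : ℂ) : rootCollapse m z ^ m = (‖z‖ : ℂ) ^ m := by
  rcases eq_or_ne m 0 with rfl | hm
  · simp
  have hexp : exp (I * ((-arg (z ^ m) / m : ℝ) : ℂ)) ^ m = exp (-(arg (z ^ m) * I)) := by
    rw [← exp_nat_mul]
    congr 1
    push_cast
    field_simp
  calc rootCollapse m z ^ m = ‖z ^ m‖ * exp (arg (z ^ m) * I) * exp (-(arg (z ^ m) * I)) := by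
        rw [rootCollapse, mul_pow, hexp, norm_mul_exp_arg_mul_I]
    _ = (‖z‖ : ℂ) ^ m := by
        rw [mul_assoc, ← exp_add, add_neg_cancel, exp_zero, mul_one, norm_pow, ofReal_pow]

lemma continuousAt_rootCollapse {m : ℕ} {z : ℂ} (hz : z ^ m ∈ slitPlane) :
    ContinuousAt (rootCollapse m) z := by
  have : ContinuousAt (fun w : ℂ => arg (w ^ m)) z :=
    (continuousAt_arg hz).comp (f := fun w : ℂ => w ^ m) (continuous_pow m).continuousAt
  unfold rootCollapse
  fun_prop

lemma norm_sub_rootCollapse_le (m : ℕ) {z : ℂ} (hz : ‖z‖ = 1) :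
    ‖z - rootCollapse m z‖ ≤ 2 / m * ‖z ^ m - 1‖ := by
  calc ‖z - rootCollapse m z‖ = ‖exp (I * ((-arg (z ^ m) / m : ℝ) : ℂ)) - 1‖ := by
        rw [rootCollapse, ← mul_one_sub, norm_mul, hz, one_mul, norm_sub_rev]
    _ ≤ |arg (z ^ m)| / m := by
        simpa [abs_div] using Real.norm_exp_I_mul_ofReal_sub_one_le (x := -arg (z ^ m) / m)
    _ = (m : ℝ)⁻¹ * (1 * |arg (z ^ m)|) := by ring
    _ ≤ (m : ℝ)⁻¹ * (4 / Real.pi * |arg (z ^ m)|) := by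
        gcongr
        rw [le_div_iff₀ Real.pi_pos]
        linarith [Real.pi_le_four]
    _ = 2 / m * (2 / Real.pi * |arg (z ^ m)|) := by ring
    _ ≤ 2 / m * ‖z ^ m - 1‖ := by
        gcongr
        nth_rewrite 2 [← exp_I_mul_arg (by rw [norm_pow, hz, one_pow] : ‖z ^ m‖ = 1)]
        exact two_div_pi_mul_abs_le_norm_exp_I_mul_ofReal_sub_one (abs_arg_le_pi _)

lemma norm_pow_sub_one_le_of_mem_spectrum {A : Type*} [CStarAlgebra A] {a : A} [IsStarNormal a]
    {z : ℂ} (hz : z ∈ spectrum ℂ a) (m : ℕ) : ‖z ^ m - 1‖ ≤ ‖a ^ m - 1‖ := by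
  calc ‖z ^ m - 1‖ ≤ ‖cfc (fun z : ℂ => z ^ m - 1) a‖ :=
        norm_apply_le_norm_cfc (fun z : ℂ => z ^ m - 1) a hz
    _ = ‖a ^ m - 1‖ := by rw [cfc_sub .., cfc_pow_id .., cfc_const_one ℂ a]

theorem stmt_4_general {A : Type*} [CStarAlgebra A]
    (m : ℕ) (u : A) (hu : u ∈ unitary A)
    (h : ‖u ^ m - 1‖ < 2) :
    ∃ w : A, w ∈ unitary A ∧ w ^ m = 1 ∧
      ‖u - w‖ ≤ (2 / (m : ℝ)) * ‖u ^ m - 1‖ := by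
  have : IsStarNormal u := isStarNormal_of_mem_unitary hu
  have hσ := spectrum.norm_eq_one_of_unitary (𝕜 := ℂ) hu
  have hcont : ContinuousOn (rootCollapse m) (spectrum ℂ u) := by
    refine fun z hz => (continuousAt_rootCollapse (mem_slitPlane_of_norm_eq_one
      (by rw [norm_pow, hσ hz, one_pow]) ?_)).continuousWithinAt
    intro hzm
    have hlt := (norm_pow_sub_one_le_of_mem_spectrum hz m).trans_lt h
    norm_num [hzm] at hlt
  refine ⟨cfc (rootCollapse m) u, ?_, ?_, ?_⟩
  · rw [cfc_unitary_iff _ u]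
    intro z hz
    rw [RCLike.star_def, conj_mul', norm_rootCollapse, hσ hz]
    norm_num
  · rw [← cfc_pow .., cfc_congr (g := fun _ => 1) fun z hz => by
      simp [rootCollapse_pow, hσ hz], cfc_const_one ℂ u]
  · nth_rewrite 1 [← cfc_id' ℂ u]
    rw [← cfc_sub ..]
    exact norm_cfc_le (by positivity) fun z hz => (norm_sub_rootCollapse_le m (hσ hz)).trans
      (by gcongr; exact norm_pow_sub_one_le_of_mem_spectrum hz m)

/-- **Spectral-arc-collapsing step** of the paper's stability lemma: if `u` is a unitary
in a unital C*-algebra with `‖u^m − 1‖ < 2`, then its spectrum lies in disjoint arcs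
around the `m`-th roots of unity, and collapsing each arc to its root of unity yields a
unitary `w` with `w^m = 1` and `‖u − w‖ ≤ (2/m) * ‖u^m − 1‖`. -/
theorem stmt_4 {A : Type*} [CStarAlgebra A]
    (m : ℕ) (hm : 1 ≤ m) (u : A) (hu : u ∈ unitary A)
    (h : ‖u ^ m - 1‖ < 2) :
    ∃ w : A, w ∈ unitary A ∧ w ^ m = 1 ∧
      ‖u - w‖ ≤ (2 / (m : ℝ)) * ‖u ^ m - 1‖ :=
  stmt_4_general m u hu h
end

section
/- Let m ≥ 1 be an integer and let λ ∈ ℂ satisfy |λ| = 1 and |λ^m − 1| < 2. Then there exists μ ∈ ℂ with μ^m = 1 and |λ − μ| ≤ (2/m)·|λ^m − 1|. -/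
/-!
Take for `ν` the `m`-th root `exp (i arg(λ^m) / m)` of `λ^m` and set `μ = λ / ν`. Then `μ^m = 1` and
`|λ - μ| = |ν - 1| ≤ |arg(λ^m)| / m`, while Jordan's inequality gives
`|λ^m - 1| ≥ (2/π) |arg(λ^m)| ≥ |arg(λ^m)| / 2`.
-/

open Complex Real

namespace Complex

theorem two_div_pi_mul_abs_le_norm_exp_I_mul_ofReal_sub_one_s5 {x : ℝ} (hx : |x| ≤ π) :
    2 / π * |x| ≤ ‖exp (I * x) - 1‖ := by
  have hsin : 2 / π * |x / 2| ≤ |Real.sin (x / 2)| :=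
    Real.mul_abs_le_abs_sin (by rw [abs_div, abs_two]; linarith)
  rw [norm_exp_I_mul_ofReal_sub_one, Real.norm_eq_abs, abs_mul, abs_two]
  rw [abs_div, abs_two] at hsin
  linarith

theorem exists_pow_eq_norm_sub_one_le {z : ℂ} (hz : ‖z‖ = 1) {m : ℕ} (hm : m ≠ 0) :
    ∃ ν : ℂ, ‖ν‖ = 1 ∧ ν ^ m = z ∧ ‖ν - 1‖ ≤ 2 / m * ‖z - 1‖ := by
  have hz_exp : exp (I * arg z) = z := by
    simpa [hz, mul_comm I] using norm_mul_exp_arg_mul_I z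
  refine ⟨exp (I * ↑(arg z / m)), norm_exp_I_mul_ofReal _, ?_, ?_⟩
  · calc exp (I * ↑(arg z / m)) ^ m = exp (I * arg z) := by
          rw [← exp_nat_mul]; congr 1; push_cast; field_simp
      _ = z := hz_exp
  · have hjordan := two_div_pi_mul_abs_le_norm_exp_I_mul_ofReal_sub_one_s5 (abs_arg_le_pi z)
    rw [hz_exp] at hjordan
    have hpi : |arg z| / 2 ≤ 2 / π * |arg z| := by
      rw [div_mul_eq_mul_div, div_le_div_iff₀ two_pos pi_pos]
      nlinarith [abs_nonneg (arg z), pi_le_four]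
    calc ‖exp (I * ↑(arg z / m)) - 1‖ ≤ ‖arg z / m‖ := norm_exp_I_mul_ofReal_sub_one_le
      _ = 2 / m * (|arg z| / 2) := by
        rw [Real.norm_eq_abs, abs_div, Nat.abs_cast]; ring
      _ ≤ 2 / m * ‖z - 1‖ := by gcongr; linarith

end Complex

theorem stmt_5_general (m : ℕ) (hm : 1 ≤ m) (lam : ℂ)
    (hlam : ‖lam‖ = 1) :
    ∃ mu : ℂ, mu ^ m = 1 ∧
      ‖lam - mu‖ ≤ (2 / (m : ℝ)) * ‖lam ^ m - 1‖ := by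
  obtain ⟨ν, hν_norm, hν_pow, hν_close⟩ :=
    exists_pow_eq_norm_sub_one_le (z := lam ^ m) (by rw [norm_pow, hlam, one_pow])
      (Nat.one_le_iff_ne_zero.mp hm)
  have hν : ν ≠ 0 := norm_ne_zero_iff.mp (by simp [hν_norm])
  have hlam0 : lam ≠ 0 := norm_ne_zero_iff.mp (by simp [hlam])
  refine ⟨lam / ν, by rw [div_pow, hν_pow, div_self (pow_ne_zero _ hlam0)], ?_⟩
  calc ‖lam - lam / ν‖ = ‖lam / ν * (ν - 1)‖ := by congr 1; field_simp
    _ = ‖ν - 1‖ := by rw [norm_mul, norm_div, hlam, hν_norm, div_one, one_mul]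
    _ ≤ 2 / m * ‖lam ^ m - 1‖ := hν_close

/-- **Scalar trigonometric estimate** behind the spectral-arc-collapsing step: every point
`λ` of the unit circle with `|λ^m − 1| < 2` is within `(2/m) * |λ^m − 1|` of some `m`-th
root of unity `μ`. -/
theorem stmt_5 (m : ℕ) (hm : 1 ≤ m) (lam : ℂ)
    (hlam : ‖lam‖ = 1) (h : ‖lam ^ m - 1‖ < 2) :
    ∃ mu : ℂ, mu ^ m = 1 ∧
      ‖lam - mu‖ ≤ (2 / (m : ℝ)) * ‖lam ^ m - 1‖ :=
  stmt_5_general m hm lam hlam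
end
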